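/- arXiv:1811.01676 — 2 statements merged into one kernel-verified Lean document; each statement's English description precedes it below -/
import Mathlib

section
/- Let d ≥ 2 and q ≥ 2 with p = (q^d - 1)/(q - 1) prime. Then the product ∏_{i=1}^{d-1} (q^d - q^i) is congruent to d modulo p. -/
/-!
Put `p = 1 + q + ⋯ + q^(d-1)`. In `ZMod p` the image `ζ` of `q` satisfies `ζ^d = 1`, and
`ζ^l ≠ 1` for `0 < l < d` because `1 < q^l < p`; so `ζ` is a primitive `d`-th root of unity.
As `p` is prime, `ZMod p` is a field, where `∏_{0<i<d} (1 - ζ^i) = Φ(1) = d` for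
`Φ = (X^d - 1)/(X - 1)`; and `q^d - q^i ≡ 1 - ζ^i`.
-/

open Finset

theorem pow_eq_one_of_geom_sum_eq_zero {R : Type*} [Ring R] {x : R} {n : ℕ}
    (h : ∑ i ∈ range n, x ^ i = 0) : x ^ n = 1 := by
  rw [← sub_eq_zero, ← geom_sum_mul, h, zero_mul]

theorem ZMod.natCast_ne_one_of_lt {m n : ℕ} (h1 : 1 < m) (hn : m < n) : (m : ZMod n) ≠ 1 := by
  rw [← Nat.cast_one, Ne, ZMod.natCast_eq_natCast_iff, Nat.ModEq,
    Nat.mod_eq_of_lt hn, Nat.mod_eq_of_lt (h1.trans hn)]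
  exact h1.ne'

theorem Nat.pow_lt_geom_sum {q l d : ℕ} (hl : 0 < l) (hld : l < d) :
    q ^ l < ∑ i ∈ range d, q ^ i :=
  calc q ^ l < ∑ i ∈ {l, 0}, q ^ i := by rw [sum_pair hl.ne']; simp
    _ ≤ ∑ i ∈ range d, q ^ i :=
      sum_le_sum_of_subset (by simp [insert_subset_iff, hld, hl.trans hld])

theorem isPrimitiveRoot_natCast_geom_sum {q d : ℕ} (hq : 2 ≤ q) (hd : 0 < d) :
    IsPrimitiveRoot (q : ZMod (∑ i ∈ range d, q ^ i)) d := by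
  refine IsPrimitiveRoot.mk_of_lt _ hd (pow_eq_one_of_geom_sum_eq_zero ?_) fun l hl hld ↦ ?_
  · exact_mod_cast ZMod.natCast_self (∑ i ∈ range d, q ^ i)
  · rw [← Nat.cast_pow]
    exact ZMod.natCast_ne_one_of_lt (Nat.one_lt_pow hl.ne' hq) (Nat.pow_lt_geom_sum hl hld)

theorem IsPrimitiveRoot.prod_pow_sub_pow_eq_order {R : Type*} [CommRing R] [IsDomain R]
    {μ : R} {d : ℕ} (hμ : IsPrimitiveRoot μ d) (hd : 0 < d) :
    ∏ i ∈ Icc 1 (d - 1), (μ ^ d - μ ^ i) = d := by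
  obtain ⟨n, rfl⟩ := Nat.exists_eq_add_one_of_ne_zero hd.ne'
  rw [hμ.pow_eq_one, Nat.add_sub_cancel, ← Ico_add_one_right_eq_Icc, prod_Ico_eq_prod_range,
    Nat.add_sub_cancel, Nat.cast_add_one, ← hμ.prod_one_sub_pow_eq_order]
  simp only [add_comm 1]

theorem stmt_3 (d q : ℕ) (hd : 2 ≤ d) (hq : 2 ≤ q)
    (hp : Nat.Prime ((q ^ d - 1) / (q - 1))) :
    (∏ i ∈ Finset.Icc 1 (d - 1), (q ^ d - q ^ i)) ≡ d [MOD (q ^ d - 1) / (q - 1)] := by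
  rw [← Nat.geomSum_eq hq] at hp ⊢
  have : Fact (Nat.Prime _) := ⟨hp⟩
  have hζ := isPrimitiveRoot_natCast_geom_sum hq (by omega : 0 < d)
  rw [← ZMod.natCast_eq_natCast_iff, Nat.cast_prod, ← hζ.prod_pow_sub_pow_eq_order (by omega)]
  refine prod_congr rfl fun i hi ↦ ?_
  rw [Nat.cast_sub (Nat.pow_le_pow_right (by omega) (by grind)), Nat.cast_pow,
    Nat.cast_pow]
end

section
/- Let d ≥ 2 be prime. Then in the polynomial ring ℤ[X], the polynomial f(X) = ∏_{i=1}^{d-1} (X^d - X^i) is congruent to the constant polynomial d modulo Φ_d(X) = X^{d-1} + ... + X + 1. -/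
open Polynomial in
theorem stmt_5 (d : ℕ) (hd : Nat.Prime d) :
    (∑ i ∈ Finset.range d, (X : ℤ[X]) ^ i) ∣
      (∏ i ∈ Finset.Icc 1 (d - 1), ((X : ℤ[X]) ^ d - X ^ i)) - C (d : ℤ) := by
  haveI : Fact d.Prime := ⟨hd⟩
  have hdpos : 0 < d := hd.pos
  set ζ : ℂ := Complex.exp (2 * Real.pi * Complex.I / d)
  have hζ : IsPrimitiveRoot ζ d := Complex.isPrimitiveRoot_exp d hd.ne_zero
  set g : ℤ[X] := (∏ i ∈ Finset.Icc 1 (d - 1), ((X : ℤ[X]) ^ d - X ^ i)) - C (d : ℤ)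
  have hroot : aeval ζ g = 0 := by
    have hζd : ζ ^ d = 1 := hζ.pow_eq_one
    obtain ⟨n, rfl⟩ : ∃ n, d = n + 1 := ⟨d - 1, (Nat.succ_pred_eq_of_pos hdpos).symm⟩
    have hprod := hζ.prod_one_sub_pow_eq_order
    simp only [g, map_sub, map_prod, map_pow, aeval_X, aeval_C, algebraMap_int_eq,
      eq_intCast, Int.cast_natCast, hζd, sub_eq_zero]
    rw [show n + 1 - 1 = n from rfl, ← Finset.Ico_add_one_right_eq_Icc, Finset.prod_Ico_eq_prod_range]
    simpa [add_comm] using hprod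
  have hdvd : cyclotomic d ℚ ∣ g.map (algebraMap ℤ ℚ) := by
    rw [cyclotomic_eq_minpoly_rat hζ hdpos]
    apply minpoly.dvd
    rwa [aeval_map_algebraMap]
  rw [← map_cyclotomic_int d ℚ] at hdvd
  have := (map_dvd_map (algebraMap ℤ ℚ) (algebraMap ℤ ℚ).injective_int
    (cyclotomic.monic d ℤ)).mp hdvd
  rwa [cyclotomic_prime ℤ d] at this
end
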